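/- Let q be a homogeneous polynomial of degree 2 in the variables x₁, x₂, x₃, x₄ whose polar form is nondegenerate, written as q = x₁·h₁ + q₁ with h₁ a linear form and q₁ a quadratic form in the variables x₂, x₃, x₄ only. Then h₁ ≠ 0 and the restriction of q₁ to the 2-dimensional subspace ker h₁ ⊆ ℂ³ is a nondegenerate quadratic form (i.e., q₁ restricted to ker h₁ has rank two; equivalently, the plane {h₁ = 0} is not tangent to the quadric cone {q₁ = 0}). This is the computation showing that the Fano variety of a cuspidal cyclic cubic fourfold has transversal A₂-singularities along Σ. -/

import Mathlib

/-!
Write `Q = x₀ · h + Q₁`, with `h` linear and `Q₁` quadratic, both independent of `x₀`. The polar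
form is `B(v, u) = v₀ h(u) + u₀ h(v) + B₁(v, u)`, and `e₀` lies in the radical of `B₁`. If `h = 0`
then `e₀` lies in the radical of `B`, so `h ≠ 0` and there is `w` with `w₀ = 0`, `h(w) = 1`.
If `v` is in the plane `{x₀ = 0, h = 0}` and `B₁`-orthogonal to that plane, then
`B₁(v, u) = h(u) B₁(v, w)` for every `u`, so `v - B₁(v, w) e₀` lies in the radical of `B`; it
therefore vanishes, and its `x₀`-coordinate gives `B₁(v, w) = 0`, whence `v = 0`.
-/

open MvPolynomial QuadraticMap

namespace MvPolynomial

variable {σ R : Type*} [CommRing R]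

theorem eval_eq_eval_of_forall_support_apply_eq_zero {p : MvPolynomial σ R} {i : σ}
    (hp : ∀ m ∈ p.support, m i = 0) {x y : σ → R} (hxy : ∀ j, j ≠ i → x j = y j) :
    eval x p = eval y p :=
  hom_congr_vars (RingHom.ext fun _ => by simp) (fun j hj _ => by
    obtain ⟨m, hm, hjm⟩ := (mem_vars_iff_mem_support j).1 hj
    simpa using hxy j (by rintro rfl; exact Finsupp.mem_support_iff.1 hjm (hp m hm))) rfl

theorem IsHomogeneous.exists_linearMap_eq_eval {p : MvPolynomial σ R} (hp : p.IsHomogeneous 1) :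
    ∃ f : Module.Dual R (σ → R), ∀ x, f x = eval x p := by
  have hspan : p ∈ Submodule.span R (Set.range X) :=
    homogeneousSubmodule_one_eq_span_X (σ := σ) (R := R) ▸ hp
  clear hp
  induction hspan using Submodule.span_induction with
  | mem _ hX =>
    obtain ⟨i, rfl⟩ := hX
    exact ⟨LinearMap.proj i, by simp⟩
  | zero => exact ⟨0, by simp⟩
  | add _ _ _ _ hf hf' =>
    obtain ⟨f, hf⟩ := hf
    obtain ⟨f', hf'⟩ := hf'
    exact ⟨f + f', by simp [hf, hf']⟩
  | smul a _ _ hf =>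
    obtain ⟨f, hf⟩ := hf
    exact ⟨a • f, by simp [hf]⟩

theorem IsHomogeneous.exists_quadraticMap_eq_eval {p : MvPolynomial σ R}
    (hp : p.IsHomogeneous 2) : ∃ Q : QuadraticMap R (σ → R) R, ∀ x, Q x = eval x p := by
  have hmem : p ∈ homogeneousSubmodule σ R 1 * homogeneousSubmodule σ R 1 := by
    rw [← pow_two, homogeneousSubmodule_one_pow]
    exact hp
  clear hp
  induction hmem using Submodule.mul_induction_on' with
  | mem_mul_mem a ha b hb =>
    obtain ⟨f, hf⟩ := IsHomogeneous.exists_linearMap_eq_eval ha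
    obtain ⟨g, hg⟩ := IsHomogeneous.exists_linearMap_eq_eval hb
    exact ⟨linMulLin f g, by simp [linMulLin_apply, hf, hg]⟩
  | add _ _ _ _ hQ hQ' =>
    obtain ⟨Q, hQ⟩ := hQ
    obtain ⟨Q', hQ'⟩ := hQ'
    exact ⟨Q + Q', by simp [hQ, hQ']⟩

end MvPolynomial

namespace QuadraticMap

variable {R M : Type*} [CommRing R] [AddCommGroup M] [Module R M]

theorem polar_linMulLin (f g : M →ₗ[R] R) (x y : M) :
    polar (linMulLin f g) x y = f x * g y + f y * g x := by
  simp only [polar, linMulLin_apply, map_add]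
  ring

variable {ℓ h : M →ₗ[R] R} {Q₁ : QuadraticMap R M R} {e : M}

theorem ne_zero_of_linMulLin_add_nondegenerate [Nontrivial R] (hℓe : ℓ e = 1)
    (hQ₁e : ∀ u, polar Q₁ e u = 0)
    (hnd : ∀ v, (∀ u, polar (linMulLin ℓ h + Q₁) v u = 0) → v = 0) : h ≠ 0 := by
  rintro rfl
  have he : e = 0 := hnd e fun u => by simp [polar_add, polar_linMulLin, hQ₁e]
  simp [he] at hℓe

theorem eq_zero_of_linMulLin_add_nondegenerate {w : M} (hℓe : ℓ e = 1) (he : h e = 0)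
    (hℓw : ℓ w = 0) (hw : h w = 1) (hQ₁e : ∀ u, polar Q₁ e u = 0)
    (hnd : ∀ v, (∀ u, polar (linMulLin ℓ h + Q₁) v u = 0) → v = 0) {v : M}
    (hℓv : ℓ v = 0) (hv : h v = 0) (hv₁ : ∀ u, ℓ u = 0 → h u = 0 → polar Q₁ v u = 0) :
    v = 0 := by
  set c := polar Q₁ v w
  have hpolar : ∀ u, polar Q₁ v u = h u * c := fun u => by
    -- `u - ℓ u • e - h u • w` lies in `ker ℓ ⊓ ker h`
    have hz := hv₁ (u - ℓ u • e - h u • w) (by simp [hℓe, hℓw]) (by simp [he, hw])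
    rw [polar_sub_right, polar_sub_right, polar_smul_right, polar_smul_right, polar_comm _ v e,
      hQ₁e] at hz
    simpa [sub_eq_zero, mul_comm] using hz
  have hv' : v - c • e = 0 := hnd _ fun u => by
    rw [FunLike.coe_add, polar_add, polar_linMulLin, polar_sub_left, polar_smul_left, hQ₁e, hpolar]
    simp [hℓv, hv, hℓe, he]
    ring
  have hc : c = 0 := by simpa [hℓv, hℓe] using congrArg ℓ hv'
  simpa [hc] using hv'

end QuadraticMap

theorem stmt_12_general (q h₁ q₁ : MvPolynomial (Fin 4) ℂ)
    (hqnd : ∀ v : Fin 4 → ℂ,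
      (∀ u : Fin 4 → ℂ, (eval (v + u) q - eval v q - eval u q) / 2 = 0) → v = 0)
    (hh₁ : h₁.IsHomogeneous 1) (hq₁ : q₁.IsHomogeneous 2)
    (hh₁0 : ∀ m ∈ h₁.support, m 0 = 0) (hq₁0 : ∀ m ∈ q₁.support, m 0 = 0)
    (hdec : q = X 0 * h₁ + q₁) :
    h₁ ≠ 0 ∧
    ∀ v : Fin 4 → ℂ, v 0 = 0 → eval v h₁ = 0 →
      (∀ u : Fin 4 → ℂ, u 0 = 0 → eval u h₁ = 0 →
        (eval (v + u) q₁ - eval v q₁ - eval u q₁) / 2 = 0) →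
      v = 0 := by
  obtain ⟨H, hH⟩ := hh₁.exists_linearMap_eq_eval
  obtain ⟨Q₁, hQ₁⟩ := hq₁.exists_quadraticMap_eq_eval
  set e : Fin 4 → ℂ := Pi.single 0 1
  have hℓe : (LinearMap.proj 0 : (Fin 4 → ℂ) →ₗ[ℂ] ℂ) e = 1 := by simp [e]
  have off_e : ∀ {p : MvPolynomial (Fin 4) ℂ}, (∀ m ∈ p.support, m 0 = 0) →
      ∀ x, eval (e + x) p = eval x p := fun hp x =>
    eval_eq_eval_of_forall_support_apply_eq_zero hp fun j hj => by simp [e, hj]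
  have he : H e = 0 := by
    rw [hH, ← add_zero e, off_e hh₁0, ← hH, map_zero]
  have hq₁e : eval e q₁ = 0 := by
    rw [← add_zero e, off_e hq₁0, ← hQ₁, map_zero]
  have hQ₁e : ∀ u, polar Q₁ e u = 0 := fun u => by
    simp [polar, hQ₁, off_e hq₁0, hq₁e]
  have hnd : ∀ v, (∀ u, polar (linMulLin (LinearMap.proj 0) H + Q₁) v u = 0) → v = 0 :=
    fun v hv => hqnd v fun u => by
      simpa [polar, hdec, hH, hQ₁, linMulLin_apply] using hv u
  have hne := ne_zero_of_linMulLin_add_nondegenerate hℓe hQ₁e hnd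
  refine ⟨fun h₁0 => hne (LinearMap.ext fun x => by simp [hH, h₁0]), fun v hv0 hvh hv => ?_⟩
  obtain ⟨x, hx⟩ := LinearMap.surjective hne 1
  refine eq_zero_of_linMulLin_add_nondegenerate (w := x - x 0 • e) hℓe he (by simp [e])
    (by simp [he, hx]) hQ₁e hnd hv0 (by rwa [hH]) fun u hu0 hu => ?_
  simpa [polar, hQ₁] using hv u hu0 (by rwa [← hH])

/-- for a nondegenerate quadratic form `q = x₁·h₁ + q₁` in `x₁, x₂, x₃, x₄`
(`h₁` linear and `q₁` quadratic in `x₂, x₃, x₄` only, the coordinates of `ℂ³` being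
identified with the hyperplane `{x₁ = 0}` of `ℂ⁴`), one has `h₁ ≠ 0` and the restriction
of `q₁` to the plane `ker h₁ ⊆ ℂ³` is a nondegenerate quadratic form (rank two):
the plane `{h₁ = 0}` is not tangent to the quadric cone `{q₁ = 0}`. -/
theorem stmt_12 (q h₁ q₁ : MvPolynomial (Fin 4) ℂ)
    (hq : q.IsHomogeneous 2)
    (hqnd : ∀ v : Fin 4 → ℂ,
      (∀ u : Fin 4 → ℂ, (eval (v + u) q - eval v q - eval u q) / 2 = 0) → v = 0)
    (hh₁ : h₁.IsHomogeneous 1) (hq₁ : q₁.IsHomogeneous 2)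
    (hh₁0 : ∀ m ∈ h₁.support, m 0 = 0) (hq₁0 : ∀ m ∈ q₁.support, m 0 = 0)
    (hdec : q = X 0 * h₁ + q₁) :
    h₁ ≠ 0 ∧
    ∀ v : Fin 4 → ℂ, v 0 = 0 → eval v h₁ = 0 →
      (∀ u : Fin 4 → ℂ, u 0 = 0 → eval u h₁ = 0 →
        (eval (v + u) q₁ - eval v q₁ - eval u q₁) / 2 = 0) →
      v = 0 :=
  stmt_12_general q h₁ q₁ hqnd hh₁ hq₁ hh₁0 hq₁0 hdec
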